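/- arXiv:2402.17257 — 4 statements merged into one kernel-verified Lean document; each statement's English description precedes it below -/
import Mathlib

section
/- For every real ρ with 0 < ρ ≤ 1, the inequality −ln(1 − exp(−ρ)) ≥ −ln ρ + ρ/2 − ρ² holds. -/
/-- For every `ρ` with `0 < ρ ≤ 1`, `-ln (1 - exp (-ρ)) ≥ -ln ρ + ρ/2 - ρ²`. -/
theorem kl_lower_bound_ge_taylor (ρ : ℝ) (hρ0 : 0 < ρ) (hρ1 : ρ ≤ 1) :
    -Real.log (1 - Real.exp (-ρ)) ≥ -Real.log ρ + ρ / 2 - ρ ^ 2 := by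
  have hexp_lt : Real.exp (-ρ) < 1 := by
    rw [Real.exp_lt_one_iff]; linarith
  have hpos : 0 < 1 - Real.exp (-ρ) := by linarith
  -- cubic lower bound on exp(-ρ)
  have habs : |(-ρ)| ≤ 1 := by rw [abs_neg, abs_of_pos hρ0]; exact hρ1
  have hb := Real.exp_bound habs (n := 3) (by norm_num)
  rw [abs_neg, abs_of_pos hρ0] at hb
  have hsum : ∑ m ∈ Finset.range 3, (-ρ) ^ m / (m.factorial : ℝ)
      = 1 - ρ + ρ ^ 2 / 2 := by
    simp [Finset.sum_range_succ]
    ring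
  rw [hsum] at hb
  have hb' : Real.exp (-ρ) ≥ 1 - ρ + ρ ^ 2 / 2 - ρ ^ 3 * (2 / 9) := by
    have h := (abs_le.mp hb).1
    norm_num [Nat.factorial] at h
    linarith
  have h1 : 1 + (ρ ^ 2 - ρ / 2) ≤ Real.exp (ρ ^ 2 - ρ / 2) := by
    have := Real.add_one_le_exp (ρ ^ 2 - ρ / 2); linarith
  have hmul : ρ * (1 + (ρ ^ 2 - ρ / 2)) ≤ ρ * Real.exp (ρ ^ 2 - ρ / 2) :=
    mul_le_mul_of_nonneg_left h1 hρ0.le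
  have key : 1 - Real.exp (-ρ) ≤ ρ * Real.exp (ρ ^ 2 - ρ / 2) := by
    have h3 : 0 < ρ ^ 3 := by positivity
    nlinarith
  have hlog := Real.log_le_log hpos key
  rw [Real.log_mul (ne_of_gt hρ0) (Real.exp_ne_zero _), Real.log_exp] at hlog
  linarith
end

section
/- Let ρ ≥ ln 2 and let p ∈ (0,1) satisfy −(1/2)·ln p − (1/2)·ln(1−p) ≤ ρ. Then min(−ln p, −ln(1−p)) ≥ −ln((1 + √(1 − 4·exp(−2ρ)))/2). -/
/-- If `ρ ≥ ln 2` and the equal-preference cross-entropy of `p ∈ (0,1)` is at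
most `ρ`, then `min (-ln p) (-ln (1 - p)) ≥ -ln ((1 + √(1 - 4·exp (-2ρ)))/2)`. -/
theorem equal_label_corrupted_kl_lower_bound
    (ρ p : ℝ) (hρ : ρ ≥ Real.log 2) (hp0 : 0 < p) (hp1 : p < 1)
    (hCE : -(1 / 2) * Real.log p - (1 / 2) * Real.log (1 - p) ≤ ρ) :
    min (-Real.log p) (-Real.log (1 - p)) ≥
      -Real.log ((1 + Real.sqrt (1 - 4 * Real.exp (-(2 * ρ)))) / 2) := by
  set E := Real.exp (-(2 * ρ)) with hE
  have hEpos : 0 < E := Real.exp_pos _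
  have h4 : (2:ℝ) * Real.log 2 = Real.log 4 := by
    rw [show (4:ℝ) = 2^2 by norm_num, Real.log_pow]; push_cast; ring
  have hE4 : 4 * E ≤ 1 := by
    have : E ≤ Real.exp (-(2 * Real.log 2)) :=
      Real.exp_le_exp.2 (by linarith)
    rw [h4, Real.exp_neg, Real.exp_log (by norm_num : (0:ℝ) < 4)] at this
    linarith
  -- p(1-p) ≥ E
  have h1p : 0 < 1 - p := by linarith
  have hprod : E ≤ p * (1 - p) := by
    have hlog : -(2 * ρ) ≤ Real.log (p * (1 - p)) := by
      rw [Real.log_mul (ne_of_gt hp0) (ne_of_gt h1p)]; linarith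
    calc E ≤ Real.exp (Real.log (p * (1 - p))) := Real.exp_le_exp.2 hlog
      _ = p * (1 - p) := Real.exp_log (mul_pos hp0 h1p)
  set s := Real.sqrt (1 - 4 * E) with hs
  have hs0 : 0 ≤ s := Real.sqrt_nonneg _
  have hs2 : s ^ 2 = 1 - 4 * E := Real.sq_sqrt (by linarith)
  have key : ∀ q : ℝ, 0 < q → E ≤ q * (1 - q) → q ≤ (1 + s) / 2 := by
    intro q hq hqE
    nlinarith [sq_nonneg (2 * q - 1 - s), sq_nonneg (2 * q - 1 + s)]
  have hr0 : 0 < (1 + s) / 2 := by linarith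
  have hp_le : p ≤ (1 + s) / 2 := key p hp0 hprod
  have h1p_le : 1 - p ≤ (1 + s) / 2 := key (1 - p) h1p (by nlinarith)
  have l1 : Real.log p ≤ Real.log ((1 + s) / 2) := Real.log_le_log hp0 hp_le
  have l2 : Real.log (1 - p) ≤ Real.log ((1 + s) / 2) := Real.log_le_log h1p h1p_le
  exact le_min (by linarith) (by linarith)
end

section
/- Let S and A be finite nonempty types, P : S → A → PMF S a transition kernel, π : S → PMF A a policy, γ a real with 0 ≤ γ < 1, and δ ≥ 0. Let r̂, r* : S → A → ℝ be reward functions with |r̂(s,a) − r*(s,a)| ≤ δ for all s, a. Suppose Q_ψ, Q_* : S → A → ℝ satisfy the Bellman equations Q_ψ(s,a) = r̂(s,a) + γ·Σ_{s'} P(s,a)(s')·Σ_{a'} π(s')(a')·Q_ψ(s',a') and Q_*(s,a) = r*(s,a) + γ·Σ_{s'} P(s,a)(s')·Σ_{a'} π(s')(a')·Q_*(s',a') for all s, a. Then |Q_ψ(s,a) − Q_*(s,a)| ≤ δ/(1−γ) for all s, a. -/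
/-!
The difference `D = Qψ - Qstar` satisfies the Bellman equation of the reward difference,
`D = (rhat - rstar) + γ • T D`, where the policy-evaluation operator `T` averages over
probability distributions and is therefore nonexpansive in the sup norm. Hence
`‖D‖ ≤ δ + γ ‖D‖`, i.e. `‖D‖ ≤ δ / (1 - γ)`.
-/

open Finset

namespace PMF

variable {α E : Type*} [Fintype α] [SeminormedAddCommGroup E] [NormedSpace ℝ E]

theorem sum_toReal_eq_one (p : PMF α) : ∑ x, (p x).toReal = 1 := by
  rw [← ENNReal.toReal_sum fun x _ => p.apply_ne_top x, ← tsum_fintype (L := .unconditional _),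
    p.tsum_coe, ENNReal.toReal_one]

theorem norm_sum_toReal_smul_le (p : PMF α) (f : α → E) :
    ‖∑ x, (p x).toReal • f x‖ ≤ ‖f‖ :=
  calc ‖∑ x, (p x).toReal • f x‖
      ≤ ∑ x, (p x).toReal * ‖f‖ := by
        refine (norm_sum_le _ _).trans (sum_le_sum fun x _ => ?_)
        rw [norm_smul, Real.norm_of_nonneg ENNReal.toReal_nonneg]
        exact mul_le_mul_of_nonneg_left (norm_le_pi_norm f x) ENNReal.toReal_nonneg
    _ = ‖f‖ := by rw [← sum_mul, p.sum_toReal_eq_one, one_mul]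

end PMF

section PolicyEvaluation

variable {S A : Type*} [Fintype S] [Fintype A]

noncomputable def policyEval (P : S → A → PMF S) (π : S → PMF A) (Q : S → A → ℝ) :
    S → A → ℝ :=
  fun s a => ∑ s', (P s a s').toReal * ∑ a', (π s' a').toReal * Q s' a'

theorem policyEval_sub (P : S → A → PMF S) (π : S → PMF A) (Q₁ Q₂ : S → A → ℝ) :
    policyEval P π (Q₁ - Q₂) = policyEval P π Q₁ - policyEval P π Q₂ := by
  funext s a
  simp only [policyEval, Pi.sub_apply, mul_sub, sum_sub_distrib]

theorem norm_policyEval_le (P : S → A → PMF S) (π : S → PMF A) (Q : S → A → ℝ) :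
    ‖policyEval P π Q‖ ≤ ‖Q‖ := by
  refine pi_norm_le_iff_of_nonneg (norm_nonneg Q) |>.2 fun s =>
    pi_norm_le_iff_of_nonneg (norm_nonneg Q) |>.2 fun a => ?_
  have hV : ‖fun s' => ∑ a', (π s' a').toReal * Q s' a'‖ ≤ ‖Q‖ :=
    pi_norm_le_iff_of_nonneg (norm_nonneg Q) |>.2 fun s' =>
      ((π s').norm_sum_toReal_smul_le (Q s')).trans (norm_le_pi_norm Q s')
  exact ((P s a).norm_sum_toReal_smul_le _).trans hV

end PolicyEvaluation

theorem q_function_error_upper_bound_general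
    {S A : Type*} [Fintype S] [Fintype A]
    (P : S → A → PMF S) (π : S → PMF A) (γ : ℝ) (hγ0 : 0 ≤ γ) (hγ1 : γ < 1)
    (δ : ℝ) (hδ : 0 ≤ δ)
    (rhat rstar : S → A → ℝ)
    (hr : ∀ s a, |rhat s a - rstar s a| ≤ δ)
    (Qψ Qstar : S → A → ℝ)
    (hQψ : ∀ s a, Qψ s a = rhat s a +
      γ * ∑ s' : S, (P s a s').toReal * ∑ a' : A, (π s' a').toReal * Qψ s' a')
    (hQstar : ∀ s a, Qstar s a = rstar s a +
      γ * ∑ s' : S, (P s a s').toReal * ∑ a' : A, (π s' a').toReal * Qstar s' a') :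
    ∀ s a, |Qψ s a - Qstar s a| ≤ δ / (1 - γ) := by
  set D := Qψ - Qstar
  have hD : D = (rhat - rstar) + γ • policyEval P π D := by
    funext s a
    simp only [D, policyEval_sub, Pi.add_apply, Pi.sub_apply, Pi.smul_apply, smul_eq_mul]
    rw [hQψ s a, hQstar s a, policyEval, policyEval]
    ring
  have hr_norm : ‖rhat - rstar‖ ≤ δ :=
    pi_norm_le_iff_of_nonneg hδ |>.2 fun s => pi_norm_le_iff_of_nonneg hδ |>.2 fun a => hr s a
  have hD_norm : ‖D‖ ≤ δ + γ * ‖D‖ :=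
    calc ‖D‖ ≤ ‖rhat - rstar‖ + γ * ‖policyEval P π D‖ := by
          conv_lhs => rw [hD]
          exact (norm_add_le _ _).trans_eq (by rw [norm_smul, Real.norm_of_nonneg hγ0])
      _ ≤ δ + γ * ‖D‖ := by gcongr; exact norm_policyEval_le P π D
  have hD_bound : ‖D‖ ≤ δ / (1 - γ) := by
    rw [le_div_iff₀ (sub_pos.2 hγ1)]
    linarith
  intro s a
  exact ((norm_le_pi_norm (D s) a).trans (norm_le_pi_norm D s)).trans hD_bound

/-- If two Q-functions satisfy the Bellman equations for the same dynamics and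
policy but reward functions that differ pointwise by at most `δ`, then they
differ pointwise by at most `δ / (1 - γ)`. -/
theorem q_function_error_upper_bound
    {S A : Type*} [Fintype S] [Fintype A] [Nonempty S] [Nonempty A]
    (P : S → A → PMF S) (π : S → PMF A) (γ : ℝ) (hγ0 : 0 ≤ γ) (hγ1 : γ < 1)
    (δ : ℝ) (hδ : 0 ≤ δ)
    (rhat rstar : S → A → ℝ)
    (hr : ∀ s a, |rhat s a - rstar s a| ≤ δ)
    (Qψ Qstar : S → A → ℝ)
    (hQψ : ∀ s a, Qψ s a = rhat s a +
      γ * ∑ s' : S, (P s a s').toReal * ∑ a' : A, (π s' a').toReal * Qψ s' a')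
    (hQstar : ∀ s a, Qstar s a = rstar s a +
      γ * ∑ s' : S, (P s a s').toReal * ∑ a' : A, (π s' a').toReal * Qstar s' a') :
    ∀ s a, |Qψ s a - Qstar s a| ≤ δ / (1 - γ) :=
  q_function_error_upper_bound_general P π γ hγ0 hγ1 δ hδ rhat rstar hr Qψ Qstar hQψ hQstar
end

section
/- Let S and A be finite nonempty types, P : S → A → PMF S a transition kernel, π : S → PMF A a policy, γ a real with 0 ≤ γ < 1, and δ ≥ 0. Let ρ be a PMF on S × A that is invariant under one step of the dynamics: for every g : S × A → ℝ, Σ_{(s,a)} ρ(s,a)·Σ_{s'} P(s,a)(s')·Σ_{a'} π(s')(a')·g(s',a') = Σ_{(s,a)} ρ(s,a)·g(s,a). Let r̂, r* : S → A → ℝ satisfy Σ_{(s,a)} ρ(s,a)·|r̂(s,a) − r*(s,a)| ≤ δ, and let Q_ψ, Q_* : S → A → ℝ satisfy the Bellman equations for (P, π, γ) with rewards r̂ and r* respectively. Then Σ_{(s,a)} ρ(s,a)·|Q_ψ(s,a) − Q_*(s,a)| ≤ δ/(1−γ). -/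
/-!
Subtracting the two Bellman equations shows that `|Qψ - Qstar|` is pointwise at most
`|rhat - rstar| + γ · T |Qψ - Qstar|`, where `T` is the one-step look-ahead. Averaging under
the stationary `ρ` turns `T` into the identity, so the `ρ`-mean `D` of `|Qψ - Qstar|`
satisfies `D ≤ δ + γ D`.
-/

open Finset

namespace MDP

variable {S A : Type*} [Fintype S] [Fintype A]

noncomputable def lookahead (P : S → A → PMF S) (π : S → PMF A) (f : S → A → ℝ)
    (s : S) (a : A) : ℝ :=
  ∑ s' : S, (P s a s').toReal * ∑ a' : A, (π s' a').toReal * f s' a'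

def IsStationary (P : S → A → PMF S) (π : S → PMF A) (ρ : PMF (S × A)) : Prop :=
  ∀ g : S × A → ℝ,
    ∑ x : S × A, (ρ x).toReal * lookahead P π (fun s a => g (s, a)) x.1 x.2
      = ∑ x : S × A, (ρ x).toReal * g x

variable (P : S → A → PMF S) (π : S → PMF A)

theorem lookahead_sub (f g : S → A → ℝ) (s : S) (a : A) :
    lookahead P π (fun s a => f s a - g s a) s a = lookahead P π f s a - lookahead P π g s a := by
  simp only [lookahead, mul_sub, sum_sub_distrib]

theorem abs_lookahead_le (f : S → A → ℝ) (s : S) (a : A) :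
    |lookahead P π f s a| ≤ lookahead P π (fun s a => |f s a|) s a := by
  unfold lookahead
  refine (abs_sum_le_sum_abs _ _).trans (sum_le_sum fun s' _ => ?_)
  rw [abs_mul, ENNReal.abs_toReal]
  gcongr
  refine (abs_sum_le_sum_abs _ _).trans (sum_le_sum fun a' _ => ?_)
  rw [abs_mul, ENNReal.abs_toReal]

variable {P π}

theorem abs_sub_le_of_bellman {γ : ℝ} (hγ : 0 ≤ γ) {r r' Q Q' : S → A → ℝ}
    (hQ : ∀ s a, Q s a = r s a + γ * lookahead P π Q s a)
    (hQ' : ∀ s a, Q' s a = r' s a + γ * lookahead P π Q' s a) (s : S) (a : A) :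
    |Q s a - Q' s a| ≤
      |r s a - r' s a| + γ * lookahead P π (fun s a => |Q s a - Q' s a|) s a := by
  have hdiff : Q s a - Q' s a =
      (r s a - r' s a) + γ * lookahead P π (fun s a => Q s a - Q' s a) s a := by
    rw [lookahead_sub, hQ s a, hQ' s a]
    ring
  calc |Q s a - Q' s a|
      ≤ |r s a - r' s a| + γ * |lookahead P π (fun s a => Q s a - Q' s a) s a| := by
        rw [hdiff]
        refine (abs_add_le _ _).trans_eq ?_
        rw [abs_mul, abs_of_nonneg hγ]
    _ ≤ _ := by gcongr; exact abs_lookahead_le P π _ s a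

theorem expectation_le_of_le_lookahead {ρ : PMF (S × A)} (hρ : IsStationary P π ρ) {γ : ℝ}
    {u v : S → A → ℝ} (huv : ∀ s a, u s a ≤ v s a + γ * lookahead P π u s a) :
    ∑ x : S × A, (ρ x).toReal * u x.1 x.2 ≤
      ∑ x : S × A, (ρ x).toReal * v x.1 x.2 + γ * ∑ x : S × A, (ρ x).toReal * u x.1 x.2 := by
  calc ∑ x : S × A, (ρ x).toReal * u x.1 x.2
      ≤ ∑ x : S × A, (ρ x).toReal * (v x.1 x.2 + γ * lookahead P π u x.1 x.2) :=
        sum_le_sum fun x _ => mul_le_mul_of_nonneg_left (huv x.1 x.2) ENNReal.toReal_nonneg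
    _ = ∑ x : S × A, (ρ x).toReal * v x.1 x.2 +
          γ * ∑ x : S × A, (ρ x).toReal * lookahead P π u x.1 x.2 := by
        rw [mul_sum, ← sum_add_distrib]
        exact sum_congr rfl fun x _ => by ring
    _ = _ := by rw [hρ fun x => u x.1 x.2]

end MDP

theorem le_div_one_sub_of_le_add_mul {x δ γ : ℝ} (hγ : γ < 1) (h : x ≤ δ + γ * x) :
    x ≤ δ / (1 - γ) := by
  rw [le_div_iff₀ (sub_pos.mpr hγ)]
  linarith

theorem q_function_error_upper_bound_stationary_general
    {S A : Type*} [Fintype S] [Fintype A]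
    (P : S → A → PMF S) (π : S → PMF A) (γ : ℝ) (hγ0 : 0 ≤ γ) (hγ1 : γ < 1)
    (δ : ℝ)
    (ρ : PMF (S × A))
    (hstat : ∀ g : S × A → ℝ,
      ∑ x : S × A, (ρ x).toReal *
        ∑ s' : S, (P x.1 x.2 s').toReal * ∑ a' : A, (π s' a').toReal * g (s', a')
      = ∑ x : S × A, (ρ x).toReal * g x)
    (rhat rstar : S → A → ℝ)
    (hr : ∑ x : S × A, (ρ x).toReal * |rhat x.1 x.2 - rstar x.1 x.2| ≤ δ)
    (Qψ Qstar : S → A → ℝ)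
    (hQψ : ∀ s a, Qψ s a = rhat s a +
      γ * ∑ s' : S, (P s a s').toReal * ∑ a' : A, (π s' a').toReal * Qψ s' a')
    (hQstar : ∀ s a, Qstar s a = rstar s a +
      γ * ∑ s' : S, (P s a s').toReal * ∑ a' : A, (π s' a').toReal * Qstar s' a') :
    ∑ x : S × A, (ρ x).toReal * |Qψ x.1 x.2 - Qstar x.1 x.2| ≤ δ / (1 - γ) := by
  have hpointwise := MDP.abs_sub_le_of_bellman hγ0 hQψ hQstar
  have hmean := MDP.expectation_le_of_le_lookahead hstat hpointwise
  exact le_div_one_sub_of_le_add_mul hγ1 (by linarith)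

/-- If `ρ` is a stationary state-action distribution and the rewards differ by
at most `δ` in expectation under `ρ`, then the corresponding Q-functions differ
by at most `δ / (1 - γ)` in expectation under `ρ`. -/
theorem q_function_error_upper_bound_stationary
    {S A : Type*} [Fintype S] [Fintype A] [Nonempty S] [Nonempty A]
    (P : S → A → PMF S) (π : S → PMF A) (γ : ℝ) (hγ0 : 0 ≤ γ) (hγ1 : γ < 1)
    (δ : ℝ) (hδ : 0 ≤ δ)
    (ρ : PMF (S × A))
    (hstat : ∀ g : S × A → ℝ,
      ∑ x : S × A, (ρ x).toReal *
        ∑ s' : S, (P x.1 x.2 s').toReal * ∑ a' : A, (π s' a').toReal * g (s', a')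
      = ∑ x : S × A, (ρ x).toReal * g x)
    (rhat rstar : S → A → ℝ)
    (hr : ∑ x : S × A, (ρ x).toReal * |rhat x.1 x.2 - rstar x.1 x.2| ≤ δ)
    (Qψ Qstar : S → A → ℝ)
    (hQψ : ∀ s a, Qψ s a = rhat s a +
      γ * ∑ s' : S, (P s a s').toReal * ∑ a' : A, (π s' a').toReal * Qψ s' a')
    (hQstar : ∀ s a, Qstar s a = rstar s a +
      γ * ∑ s' : S, (P s a s').toReal * ∑ a' : A, (π s' a').toReal * Qstar s' a') :
    ∑ x : S × A, (ρ x).toReal * |Qψ x.1 x.2 - Qstar x.1 x.2| ≤ δ / (1 - γ) :=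
  q_function_error_upper_bound_stationary_general P π γ hγ0 hγ1 δ ρ hstat rhat rstar hr Qψ Qstar hQψ
    hQstar
end
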